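/- arXiv:2409.01074 — 2 statements merged into one kernel-verified Lean document; each statement's English description precedes it below -/
import Mathlib

section
/- Consider two SGD trajectories w_t and w̃_t on datasets S and S̃ differing only in the n-th example, updated with the same index sequence and step sizes η_t ≤ 1/L, starting from the same initial point. If each loss f(·; z) is convex and L-smooth, then ‖w_{T+1} − w̃_{T+1}‖ ≤ \sum_{t=1}^{T} η_t·δ_t·1[the index chosen at step t equals n], where δ_t = ‖∇f(w_t; z_n) − ∇f(w_t; z̃_n)‖. -/
open InnerProductSpace Set

section Aux
variable {W : Type*} [NormedAddCommGroup W] [InnerProductSpace ℝ W] [CompleteSpace W]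

lemma grad_lower (g : W → ℝ) (G : W → W) (hg : ∀ w, HasGradientAt g (G w) w)
    (hc : ConvexOn ℝ Set.univ g) (x y : W) :
    g x + inner ℝ (G x) (y - x) ≤ g y := by
  have hφc : ConvexOn ℝ Set.univ (g ∘ (AffineMap.lineMap x y : ℝ →ᵃ[ℝ] W)) := by
    have := hc.comp_affineMap (AffineMap.lineMap x y : ℝ →ᵃ[ℝ] W)
    simpa using this
  have hd : HasDerivAt (g ∘ (AffineMap.lineMap x y : ℝ →ᵃ[ℝ] W))
      ((inner ℝ (G x) (y - x) : ℝ)) 0 := by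
    have h1 : HasDerivAt (AffineMap.lineMap x y : ℝ → W) (y - x) 0 :=
      AffineMap.hasDerivAt_lineMap
    have h2 := (hg ((AffineMap.lineMap x y : ℝ → W) 0)).hasFDerivAt
    have h3 := h2.comp_hasDerivAt 0 h1
    simpa [AffineMap.lineMap_apply_zero, InnerProductSpace.toDual_apply_apply] using h3
  have := hφc.le_slope_of_hasDerivAt (Set.mem_univ (0:ℝ)) (Set.mem_univ (1:ℝ)) one_pos hd
  simp only [slope_def_field, Function.comp_apply, AffineMap.lineMap_apply_zero,
    AffineMap.lineMap_apply_one] at this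
  norm_num at this
  linarith

lemma grad_upper (g : W → ℝ) (G : W → W) (L : ℝ) (hL : 0 < L)
    (hg : ∀ w, HasGradientAt g (G w) w)
    (hLip : ∀ u v, ‖G u - G v‖ ≤ L * ‖u - v‖) (x y : W) :
    g y ≤ g x + inner ℝ (G x) (y - x) + L * ‖y - x‖ ^ 2 := by
  set p : W → ℝ := fun w => g w - inner ℝ (G x) w with hp
  have hder : ∀ w : W, HasFDerivAt p (toDual ℝ W (G w - G x)) w := by
    intro w
    have h1 := (hg w).hasFDerivAt
    have h2 : HasFDerivAt (fun u : W => (inner ℝ (G x) u : ℝ)) (toDual ℝ W (G x)) w := by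
      convert (toDual ℝ W (G x)).hasFDerivAt (x := w) using 1
      ext u; simp [InnerProductSpace.toDual_apply_apply]
    have := h1.sub h2
    rw [map_sub]; exact this
  have hbound : ∀ w ∈ segment ℝ x y, ‖toDual ℝ W (G w - G x)‖ ≤ L * ‖y - x‖ := by
    intro w hw
    rw [(toDual ℝ W).norm_map]
    refine (hLip w x).trans ?_
    gcongr
    rw [segment_eq_image'] at hw
    obtain ⟨t, ht, rfl⟩ := hw
    rw [add_sub_cancel_left, norm_smul, Real.norm_eq_abs, abs_of_nonneg ht.1]
    nlinarith [norm_nonneg (y - x), ht.2]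
  have key := (convex_segment x y).norm_image_sub_le_of_norm_hasFDerivWithin_le
    (fun w _ => (hder w).hasFDerivWithinAt) hbound
    (left_mem_segment ℝ x y) (right_mem_segment ℝ x y)
  have h1 : p y - p x ≤ L * ‖y - x‖ * ‖y - x‖ :=
    le_trans (le_abs_self _) (by simpa [Real.norm_eq_abs] using key)
  have h2 : (inner ℝ (G x) (y - x) : ℝ) = inner ℝ (G x) y - inner ℝ (G x) x := inner_sub_right _ _ _
  simp only [hp] at h1
  nlinarith [h1]

lemma grad_coco (g : W → ℝ) (G : W → W) (L : ℝ) (hL : 0 < L)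
    (hg : ∀ w, HasGradientAt g (G w) w) (hc : ConvexOn ℝ Set.univ g)
    (hLip : ∀ u v, ‖G u - G v‖ ≤ L * ‖u - v‖) (x y : W) :
    ‖G x - G y‖ ^ 2 ≤ 2 * L * inner ℝ (G x - G y) (x - y) := by
  have key : ∀ a b : W,
      g b + inner ℝ (G b) (a - b) + (1 / (4 * L)) * ‖G a - G b‖ ^ 2 ≤ g a := by
    intro a b
    set d := G a - G b with hd
    set ws := a - (1 / (2 * L)) • d with hws
    have h1 : g b + inner ℝ (G b) (ws - b) ≤ g ws := grad_lower g G hg hc b ws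
    have h2 : g ws ≤ g a + inner ℝ (G a) (ws - a) + L * ‖ws - a‖ ^ 2 :=
      grad_upper g G L hL hg hLip a ws
    have e1 : ws - b = (a - b) - (1 / (2 * L)) • d := by rw [hws]; abel
    have e2 : ws - a = -((1 / (2 * L)) • d) := by rw [hws]; abel
    have i1 : (inner ℝ (G b) (ws - b) : ℝ)
        = inner ℝ (G b) (a - b) - (1 / (2 * L)) * inner ℝ (G b) d := by
      rw [e1, inner_sub_right, real_inner_smul_right]
    have i2 : (inner ℝ (G a) (ws - a) : ℝ) = -((1 / (2 * L)) * inner ℝ (G a) d) := by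
      rw [e2, inner_neg_right, real_inner_smul_right]
    have i3 : L * ‖ws - a‖ ^ 2 = (1 / (4 * L)) * ‖d‖ ^ 2 := by
      rw [e2, norm_neg, norm_smul, Real.norm_eq_abs, abs_of_pos (by positivity)]
      field_simp; ring
    have i4 : (inner ℝ (G a) d : ℝ) - inner ℝ (G b) d = ‖d‖ ^ 2 := by
      rw [← inner_sub_left, ← hd, real_inner_self_eq_norm_sq]
    have hL4 : (0:ℝ) < 1 / (2 * L) := by positivity
    rw [i1] at h1; rw [i2, i3] at h2
    have h6 := h1.trans h2
    have h5 : (1 / (2 * L)) * inner ℝ (G a) d - (1 / (2 * L)) * inner ℝ (G b) d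
        = (1 / (2 * L)) * ‖d‖ ^ 2 := by rw [← mul_sub, i4]
    have hc2 : (1 / (2 * L)) * ‖d‖ ^ 2 = 2 * ((1 / (4 * L)) * ‖d‖ ^ 2) := by
      field_simp; ring
    linarith [h6, h5, hc2]
  have k1 := key x y
  have k2 := key y x
  have hn : ‖G y - G x‖ = ‖G x - G y‖ := norm_sub_rev _ _
  have hi : (inner ℝ (G y) (x - y) : ℝ) + inner ℝ (G x) (y - x)
      = - inner ℝ (G x - G y) (x - y) := by
    rw [inner_sub_left]
    have : (inner ℝ (G x) (y - x) : ℝ) = - inner ℝ (G x) (x - y) := by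
      rw [← inner_neg_right]; congr 1; abel
    rw [this]; ring
  rw [hn] at k2
  have step : (1 / (4 * L)) * ‖G x - G y‖ ^ 2 + (1 / (4 * L)) * ‖G x - G y‖ ^ 2
      ≤ inner ℝ (G x - G y) (x - y) := by linarith [k1, k2, hi]
  have h2 : 2 * L * ((1 / (4 * L)) * ‖G x - G y‖ ^ 2 + (1 / (4 * L)) * ‖G x - G y‖ ^ 2)
      = ‖G x - G y‖ ^ 2 := by field_simp; ring
  have h3 := mul_le_mul_of_nonneg_left step (by positivity : (0:ℝ) ≤ 2 * L)
  linarith [h3, h2]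

lemma grad_nonexpansive (g : W → ℝ) (G : W → W) (L : ℝ) (hL : 0 < L)
    (hg : ∀ w, HasGradientAt g (G w) w) (hc : ConvexOn ℝ Set.univ g)
    (hLip : ∀ u v, ‖G u - G v‖ ≤ L * ‖u - v‖) (η : ℝ) (hη1 : 0 < η) (hη2 : η ≤ 1 / L)
    (u v : W) : ‖(u - η • G u) - (v - η • G v)‖ ≤ ‖u - v‖ := by
  set a := u - v with ha
  set d := G u - G v with hd
  have hveq : (u - η • G u) - (v - η • G v) = a - η • d := by
    rw [ha, hd, smul_sub]; abel
  have hsq : ‖a - η • d‖ ^ 2 = ‖a‖ ^ 2 - 2 * (η * inner ℝ d a) + η ^ 2 * ‖d‖ ^ 2 := by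
    rw [norm_sub_sq_real, real_inner_smul_right, norm_smul, Real.norm_eq_abs,
      abs_of_pos hη1, real_inner_comm]
    ring
  have hcoco' : ‖d‖ ^ 2 ≤ 2 * L * inner ℝ d a := by
    rw [hd, ha]; exact grad_coco g G L hL hg hc hLip u v
  have hηL : η * L ≤ 1 := by
    rw [le_div_iff₀ hL] at hη2; linarith
  have hinn : (0:ℝ) ≤ inner ℝ d a := by nlinarith [sq_nonneg ‖d‖]
  have hA : η * ‖d‖ ^ 2 ≤ η * (2 * L * inner ℝ d a) :=
    mul_le_mul_of_nonneg_left hcoco' hη1.le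
  have hB : η * L * inner ℝ d a ≤ 1 * inner ℝ d a :=
    mul_le_mul_of_nonneg_right hηL hinn
  have hfin : ‖a - η • d‖ ^ 2 ≤ ‖a‖ ^ 2 := by
    rw [hsq]
    nlinarith [hA, hB, mul_le_mul_of_nonneg_left hA hη1.le,
      mul_le_mul_of_nonneg_left hB hη1.le]
  rw [hveq]
  have hs := Real.sqrt_le_sqrt hfin
  rwa [Real.sqrt_sq (norm_nonneg _), Real.sqrt_sq (norm_nonneg _)] at hs

end Aux

/-- Stability of two SGD trajectories on datasets differing only at one position,
with shared index sequence and step sizes `η t ≤ 1/L`, for convex `L`-smooth losses: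
`‖w_{T+1} - w̃_{T+1}‖ ≤ ∑_{t=1}^T η_t δ_t 1[i_t = i₀]`. -/
theorem stmt_8 {W Z : Type*} [NormedAddCommGroup W] [InnerProductSpace ℝ W] [CompleteSpace W]
    (f : W → Z → ℝ) (grad : W → Z → W) (L : ℝ) (hL : 0 < L)
    (hgrad : ∀ z w, HasGradientAt (fun v => f v z) (grad w z) w)
    (hconv : ∀ z, ConvexOn ℝ Set.univ (fun v => f v z))
    (hsmooth : ∀ z w w', ‖grad w z - grad w' z‖ ≤ L * ‖w - w'‖)
    (n : ℕ) (hn : 0 < n) (S St : Fin n → Z) (i₀ : Fin n)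
    (hagree : ∀ i, i ≠ i₀ → S i = St i)
    (idx : ℕ → Fin n) (η : ℕ → ℝ) (hη0 : ∀ t, 0 < η t) (hη : ∀ t, η t ≤ 1 / L)
    (w wt : ℕ → W) (hinit : w 1 = wt 1)
    (hupd : ∀ t, 1 ≤ t → w (t + 1) = w t - η t • grad (w t) (S (idx t)))
    (hupdt : ∀ t, 1 ≤ t → wt (t + 1) = wt t - η t • grad (wt t) (St (idx t)))
    (T : ℕ) :
    ‖w (T + 1) - wt (T + 1)‖ ≤ ∑ t ∈ Finset.Icc 1 T,
      η t * ‖grad (w t) (S i₀) - grad (w t) (St i₀)‖ * (if idx t = i₀ then 1 else 0) := by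
  induction T with
  | zero => simp [hinit]
  | succ T ih =>
    rw [Finset.sum_Icc_succ_top (Nat.le_add_left 1 T)]
    have hT1 : 1 ≤ T + 1 := Nat.le_add_left 1 T
    have hu := hupd (T + 1) hT1
    have hut := hupdt (T + 1) hT1
    have nonexp : ∀ z : Z, ‖(w (T+1) - η (T+1) • grad (w (T+1)) z)
        - (wt (T+1) - η (T+1) • grad (wt (T+1)) z)‖ ≤ ‖w (T+1) - wt (T+1)‖ := fun z =>
      grad_nonexpansive (fun v => f v z) (fun v => grad v z) L hL
        (fun w' => hgrad z w') (hconv z) (fun u v => hsmooth z u v)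
        (η (T+1)) (hη0 _) (hη _) (w (T+1)) (wt (T+1))
    by_cases hcase : idx (T + 1) = i₀
    · have hdec : w (T + 1 + 1) - wt (T + 1 + 1)
          = ((w (T+1) - η (T+1) • grad (w (T+1)) (St i₀))
              - (wt (T+1) - η (T+1) • grad (wt (T+1)) (St i₀)))
            - η (T+1) • (grad (w (T+1)) (S i₀) - grad (w (T+1)) (St i₀)) := by
        rw [hu, hut, hcase, smul_sub]; abel
      rw [hdec, if_pos hcase, mul_one]
      refine (norm_sub_le _ _).trans ?_
      have h2 : ‖η (T+1) • (grad (w (T+1)) (S i₀) - grad (w (T+1)) (St i₀))‖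
          = η (T+1) * ‖grad (w (T+1)) (S i₀) - grad (w (T+1)) (St i₀)‖ := by
        rw [norm_smul, Real.norm_eq_abs, abs_of_pos (hη0 _)]
      rw [h2]
      exact add_le_add ((nonexp (St i₀)).trans ih) le_rfl
    · have hz : S (idx (T+1)) = St (idx (T+1)) := hagree _ hcase
      have hdec : w (T + 1 + 1) - wt (T + 1 + 1)
          = (w (T+1) - η (T+1) • grad (w (T+1)) (S (idx (T+1))))
            - (wt (T+1) - η (T+1) • grad (wt (T+1)) (S (idx (T+1)))) := by
        rw [hu, hut, hz]
      rw [hdec, if_neg hcase, mul_zero, add_zero]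
      exact (nonexp _).trans ih
end

section
/- Under the conditions of the per-trajectory SGD stability bound and assuming each f(·; z) is additionally G-Lipschitz, two SGD trajectories on neighboring datasets with shared index sequence satisfy ‖w_{T+1} − w̃_{T+1}‖ ≤ 2G·\sum_{t=1}^{T} η_t·1[i_t = n]. -/
open RealInnerProductSpace

section Aux

variable {W : Type*} [NormedAddCommGroup W] [InnerProductSpace ℝ W] [CompleteSpace W]

lemma aux_lineDeriv (g : W → ℝ) (g' : W → W) (hg : ∀ w, HasGradientAt g (g' w) w)
    (x u : W) (t : ℝ) :
    HasDerivAt (fun s : ℝ => g (x + s • u)) ⟪g' (x + t • u), u⟫ t := by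
  have hline : HasDerivAt (fun s : ℝ => x + s • u) u t := by
    simpa using ((hasDerivAt_id t).smul_const u).const_add x
  have hF := (hasGradientAt_iff_hasFDerivAt.1 (hg (x + t • u)))
  have := hF.comp_hasDerivAt t hline
  simpa [InnerProductSpace.toDual_apply_apply, Function.comp_def] using this

/-- Descent lemma: `g y ≤ g x + ⟪∇g x, y - x⟫ + L/2 ‖y-x‖²`. -/
lemma aux_descent (g : W → ℝ) (g' : W → W) (L : ℝ) (hL : 0 < L)
    (hg : ∀ w, HasGradientAt g (g' w) w)
    (hsm : ∀ w w', ‖g' w - g' w'‖ ≤ L * ‖w - w'‖) (x y : W) :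
    g y ≤ g x + ⟪g' x, y - x⟫ + L / 2 * ‖y - x‖ ^ 2 := by
  set u := y - x with hu
  set c0 : ℝ := ⟪g' x, u⟫ with hc0
  set ψ : ℝ → ℝ := fun t => g (x + t • u) - t * c0 - L / 2 * ‖u‖ ^ 2 * t ^ 2 with hψ
  have hψd : ∀ t : ℝ, HasDerivAt ψ
      (⟪g' (x + t • u), u⟫ - c0 - L * ‖u‖ ^ 2 * t) t := by
    intro t
    have h1 := aux_lineDeriv g g' hg x u t
    have h2 : HasDerivAt (fun s : ℝ => s * c0) c0 t := by
      simpa using (hasDerivAt_id t).mul_const c0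
    have h3 : HasDerivAt (fun s : ℝ => L / 2 * ‖u‖ ^ 2 * s ^ 2)
        (L * ‖u‖ ^ 2 * t) t := by
      have := (hasDerivAt_pow 2 t).const_mul (L / 2 * ‖u‖ ^ 2)
      refine this.congr_deriv ?_
      push_cast
      ring
    exact (h1.sub h2).sub h3
  have hanti : AntitoneOn ψ (Set.Icc (0 : ℝ) 1) := by
    apply antitoneOn_of_hasDerivWithinAt_nonpos (convex_Icc 0 1)
      (f' := fun t => ⟪g' (x + t • u), u⟫ - c0 - L * ‖u‖ ^ 2 * t)
    · exact fun t _ => (hψd t).continuousAt.continuousWithinAt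
    · exact fun t _ => (hψd t).hasDerivWithinAt
    · intro t ht
      rw [interior_Icc] at ht
      have ht0 : (0 : ℝ) ≤ t := le_of_lt ht.1
      have hineq : ⟪g' (x + t • u), u⟫ - c0 ≤ L * ‖u‖ ^ 2 * t := by
        have h1 : ⟪g' (x + t • u), u⟫ - c0 = ⟪g' (x + t • u) - g' x, u⟫ := by
          rw [hc0, inner_sub_left]
        have h2 : ⟪g' (x + t • u) - g' x, u⟫ ≤ ‖g' (x + t • u) - g' x‖ * ‖u‖ :=
          real_inner_le_norm _ _
        have h3 : ‖g' (x + t • u) - g' x‖ ≤ L * (t * ‖u‖) := by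
          have := hsm (x + t • u) x
          simpa [norm_smul, abs_of_nonneg ht0] using this
        calc ⟪g' (x + t • u), u⟫ - c0 = ⟪g' (x + t • u) - g' x, u⟫ := h1
          _ ≤ ‖g' (x + t • u) - g' x‖ * ‖u‖ := h2
          _ ≤ L * (t * ‖u‖) * ‖u‖ := by
              apply mul_le_mul_of_nonneg_right h3 (norm_nonneg _)
          _ = L * ‖u‖ ^ 2 * t := by ring
      linarith
  have h01 := hanti (Set.left_mem_Icc.2 zero_le_one) (Set.right_mem_Icc.2 zero_le_one)
    zero_le_one
  have hψ0 : ψ 0 = g x := by simp [hψ]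
  have hψ1 : ψ 1 = g y - c0 - L / 2 * ‖u‖ ^ 2 := by
    simp [hψ, hu]
  rw [hψ0, hψ1] at h01
  linarith

/-- First-order condition for convexity. -/
lemma aux_firstorder (g : W → ℝ) (g' : W → W) (hg : ∀ w, HasGradientAt g (g' w) w)
    (hconv : ConvexOn ℝ Set.univ g) (x y : W) :
    g x + ⟪g' x, y - x⟫ ≤ g y := by
  set u := y - x with hu
  set φ : ℝ → ℝ := fun t => g (x + t • u) with hφ
  have hφconv : ConvexOn ℝ Set.univ φ := by
    refine ⟨convex_univ, ?_⟩
    intro s _ t _ a b ha hb hab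
    have hpt : x + (a * s + b * t) • u = a • (x + s • u) + b • (x + t • u) := by
      have hmod : a • (x + s • u) + b • (x + t • u)
          = (a + b) • x + (a * s + b * t) • u := by module
      rw [hmod, hab, one_smul]
    have := hconv.2 (Set.mem_univ (x + s • u)) (Set.mem_univ (x + t • u)) ha hb hab
    simpa [hφ, hpt] using this
  have hd : HasDerivAt φ ⟪g' x, u⟫ 0 := by
    have := aux_lineDeriv g g' hg x u 0
    simpa using this
  have := hφconv.le_slope_of_hasDerivAt (Set.mem_univ (0:ℝ)) (Set.mem_univ (1:ℝ))
    zero_lt_one hd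
  have hslope : slope φ 0 1 = g y - g x := by
    simp [slope_def_field, hφ, hu]
  rw [hslope] at this
  linarith

/-- Co-coercivity of the gradient of a convex `L`-smooth function. -/
lemma aux_coco (g : W → ℝ) (g' : W → W) (L : ℝ) (hL : 0 < L)
    (hg : ∀ w, HasGradientAt g (g' w) w)
    (hconv : ConvexOn ℝ Set.univ g)
    (hsm : ∀ w w', ‖g' w - g' w'‖ ≤ L * ‖w - w'‖) (x y : W) :
    1 / L * ‖g' x - g' y‖ ^ 2 ≤ ⟪g' x - g' y, x - y⟫ := by
  -- key one-sided estimate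
  have key : ∀ a b : W, g b - ⟪g' b, b⟫ + 1 / (2 * L) * ‖g' a - g' b‖ ^ 2
      ≤ g a - ⟪g' b, a⟫ := by
    intro a b
    set c := g' b with hc
    set h : W → ℝ := fun v => g v - ⟪c, v⟫ with hh
    set h' : W → W := fun v => g' v - c with hh'
    have hgh : ∀ v, HasGradientAt h (h' v) v := by
      intro v
      rw [hasGradientAt_iff_hasFDerivAt]
      have h1 := hasGradientAt_iff_hasFDerivAt.1 (hg v)
      have h2 : HasFDerivAt (fun v : W => ⟪c, v⟫) (innerSL ℝ c) v :=
        (innerSL ℝ c).hasFDerivAt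
      have := h1.sub h2
      refine this.congr_fderiv ?_
      apply ContinuousLinearMap.ext
      intro w
      simp [hh', InnerProductSpace.toDual_apply_apply, inner_sub_left]
    have hhconv : ConvexOn ℝ Set.univ h := by
      refine ⟨convex_univ, ?_⟩
      intro v _ w _ a b ha hb hab
      have := hconv.2 (Set.mem_univ v) (Set.mem_univ w) ha hb hab
      simp only [hh, smul_eq_mul]
      have hinner : ⟪c, a • v + b • w⟫ = a * ⟪c, v⟫ + b * ⟪c, w⟫ := by
        rw [inner_add_right, real_inner_smul_right, real_inner_smul_right]
      simp only [smul_eq_mul] at this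
      linarith
    have hhsm : ∀ v v', ‖h' v - h' v'‖ ≤ L * ‖v - v'‖ := by
      intro v v'
      have : h' v - h' v' = g' v - g' v' := by simp [hh']
      rw [this]; exact hsm v v'
    -- b is a global min of h
    have hmin : h b ≤ h (a - (1 / L) • h' a) := by
      have := aux_firstorder h h' hgh hhconv b (a - (1 / L) • h' a)
      have hz : h' b = 0 := by simp [hh', hc]
      simpa [hz] using this
    -- descent step at a
    have hdesc := aux_descent h h' L hL hgh hhsm a (a - (1 / L) • h' a)
    have hsimp : a - (1 / L) • h' a - a = -((1 / L) • h' a) := by abel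
    rw [hsimp] at hdesc
    have hLne : L ≠ 0 := ne_of_gt hL
    have hinner2 : ⟪h' a, -((1 / L) • h' a)⟫ = -(1 / L) * ‖h' a‖ ^ 2 := by
      rw [inner_neg_right, real_inner_smul_right, real_inner_self_eq_norm_sq]
      ring
    have hnorm2 : ‖-((1 / L) • h' a)‖ ^ 2 = (1 / L) ^ 2 * ‖h' a‖ ^ 2 := by
      rw [norm_neg, norm_smul, Real.norm_eq_abs,
        abs_of_pos (by positivity : (0:ℝ) < 1 / L), mul_pow]
    rw [hinner2, hnorm2] at hdesc
    have hstep : h (a - (1 / L) • h' a) ≤ h a - 1 / (2 * L) * ‖h' a‖ ^ 2 := by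
      have : h a + -(1 / L) * ‖h' a‖ ^ 2 + L / 2 * ((1 / L) ^ 2 * ‖h' a‖ ^ 2)
          = h a - 1 / (2 * L) * ‖h' a‖ ^ 2 := by
        field_simp
        ring
      linarith [hdesc, this.symm.le]
    have hfinal : h b ≤ h a - 1 / (2 * L) * ‖h' a‖ ^ 2 := le_trans hmin hstep
    have : h' a = g' a - g' b := by simp [hh', hc]
    rw [this] at hfinal
    simp only [hh, hc] at hfinal
    linarith
  have k1 := key x y
  have k2 := key y x
  have hrev : ‖g' y - g' x‖ = ‖g' x - g' y‖ := norm_sub_rev _ _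
  rw [hrev] at k2
  have hsum : 1 / L * ‖g' x - g' y‖ ^ 2 ≤
      ⟪g' x, x⟫ - ⟪g' x, y⟫ - ⟪g' y, x⟫ + ⟪g' y, y⟫ := by
    have h2L : 1 / (2 * L) + 1 / (2 * L) = 1 / L := by
      rw [← add_div, show (1:ℝ) + 1 = 2 by norm_num, ← div_div]
      norm_num
    nlinarith [k1, k2]
  have hexp : ⟪g' x - g' y, x - y⟫ =
      ⟪g' x, x⟫ - ⟪g' x, y⟫ - ⟪g' y, x⟫ + ⟪g' y, y⟫ := by
    rw [inner_sub_left, inner_sub_right, inner_sub_right]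
    ring
  linarith [hexp.symm.le, hexp.le]

/-- Non-expansiveness of the gradient step. -/
lemma aux_nonexp (g : W → ℝ) (g' : W → W) (L : ℝ) (hL : 0 < L)
    (hg : ∀ w, HasGradientAt g (g' w) w)
    (hconv : ConvexOn ℝ Set.univ g)
    (hsm : ∀ w w', ‖g' w - g' w'‖ ≤ L * ‖w - w'‖)
    (η : ℝ) (hη0 : 0 < η) (hη : η ≤ 1 / L) (x y : W) :
    ‖(x - η • g' x) - (y - η • g' y)‖ ≤ ‖x - y‖ := by
  set a := x - y with ha
  set b := g' x - g' y with hb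
  have hrw : (x - η • g' x) - (y - η • g' y) = a - η • b := by
    simp [ha, hb, smul_sub]; abel
  rw [hrw]
  have hcoco := aux_coco g g' L hL hg hconv hsm x y
  have hsq : ‖a - η • b‖ ^ 2 ≤ ‖a‖ ^ 2 := by
    have hexp : ‖a - η • b‖ ^ 2 = ‖a‖ ^ 2 - 2 * (η * ⟪a, b⟫) + η ^ 2 * ‖b‖ ^ 2 := by
      rw [norm_sub_sq_real, real_inner_smul_right, norm_smul]
      simp [abs_of_pos hη0]
      ring
    rw [hexp]
    have hab : ⟪a, b⟫ = ⟪b, a⟫ := real_inner_comm _ _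
    have hbge : 1 / L * ‖b‖ ^ 2 ≤ ⟪a, b⟫ := by rw [hab]; exact hcoco
    have hη2 : η ^ 2 ≤ η * (1 / L) := by nlinarith
    nlinarith [sq_nonneg ‖b‖, hη0.le]
  have := Real.sqrt_le_sqrt hsq
  rwa [Real.sqrt_sq (norm_nonneg _), Real.sqrt_sq (norm_nonneg _)] at this

end Aux

/-- Under the SGD stability setting, if the losses are additionally `G`-Lipschitz
(`‖∇f(w;z)‖ ≤ G`), then `‖w_{T+1} - w̃_{T+1}‖ ≤ 2G ∑_{t=1}^T η_t 1[i_t = i₀]`. -/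
theorem stmt_9 {W Z : Type*} [NormedAddCommGroup W] [InnerProductSpace ℝ W] [CompleteSpace W]
    (f : W → Z → ℝ) (grad : W → Z → W) (L G : ℝ) (hL : 0 < L) (hG : 0 ≤ G)
    (hgrad : ∀ z w, HasGradientAt (fun v => f v z) (grad w z) w)
    (hconv : ∀ z, ConvexOn ℝ Set.univ (fun v => f v z))
    (hsmooth : ∀ z w w', ‖grad w z - grad w' z‖ ≤ L * ‖w - w'‖)
    (hlip : ∀ w z, ‖grad w z‖ ≤ G)
    (n : ℕ) (hn : 0 < n) (S St : Fin n → Z) (i₀ : Fin n)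
    (hagree : ∀ i, i ≠ i₀ → S i = St i)
    (idx : ℕ → Fin n) (η : ℕ → ℝ) (hη0 : ∀ t, 0 < η t) (hη : ∀ t, η t ≤ 1 / L)
    (w wt : ℕ → W) (hinit : w 1 = wt 1)
    (hupd : ∀ t, 1 ≤ t → w (t + 1) = w t - η t • grad (w t) (S (idx t)))
    (hupdt : ∀ t, 1 ≤ t → wt (t + 1) = wt t - η t • grad (wt t) (St (idx t)))
    (T : ℕ) :
    ‖w (T + 1) - wt (T + 1)‖ ≤ 2 * G * ∑ t ∈ Finset.Icc 1 T,
      η t * (if idx t = i₀ then 1 else 0) := by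
  induction T with
  | zero =>
    simp [hinit]
  | succ T ih =>
    have hT1 : 1 ≤ T + 1 := Nat.le_add_left 1 T
    have hu := hupd (T + 1) hT1
    have hut := hupdt (T + 1) hT1
    have hsum : ∑ t ∈ Finset.Icc 1 (T + 1), η t * (if idx t = i₀ then 1 else 0)
        = (∑ t ∈ Finset.Icc 1 T, η t * (if idx t = i₀ then 1 else 0))
          + η (T + 1) * (if idx (T + 1) = i₀ then 1 else 0) := by
      rw [Finset.sum_Icc_succ_top hT1]
    rw [hsum, mul_add]
    by_cases hc : idx (T + 1) = i₀
    · -- perturbed step: bound by triangle inequality plus non-expansiveness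
      rw [if_pos hc]
      -- decompose
      have hdecomp : w (T + 1 + 1) - wt (T + 1 + 1)
          = ((w (T + 1) - η (T + 1) • grad (w (T + 1)) (S (idx (T + 1))))
              - (wt (T + 1) - η (T + 1) • grad (wt (T + 1)) (S (idx (T + 1)))))
            + η (T + 1) • (grad (wt (T + 1)) (St (idx (T + 1)))
              - grad (wt (T + 1)) (S (idx (T + 1)))) := by
        rw [hu, hut, smul_sub]; abel
      have hne := aux_nonexp (fun v => f v (S (idx (T + 1))))
        (fun v => grad v (S (idx (T + 1)))) L hL
        (fun v => hgrad (S (idx (T + 1))) v) (hconv _)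
        (fun v v' => hsmooth _ v v') (η (T + 1)) (hη0 _) (hη _)
        (w (T + 1)) (wt (T + 1))
      have hGdiff : ‖grad (wt (T + 1)) (St (idx (T + 1)))
          - grad (wt (T + 1)) (S (idx (T + 1)))‖ ≤ 2 * G := by
        calc _ ≤ ‖grad (wt (T + 1)) (St (idx (T + 1)))‖
              + ‖grad (wt (T + 1)) (S (idx (T + 1)))‖ := norm_sub_le _ _
          _ ≤ G + G := add_le_add (hlip _ _) (hlip _ _)
          _ = 2 * G := by ring
      calc ‖w (T + 1 + 1) - wt (T + 1 + 1)‖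
          ≤ ‖(w (T + 1) - η (T + 1) • grad (w (T + 1)) (S (idx (T + 1))))
              - (wt (T + 1) - η (T + 1) • grad (wt (T + 1)) (S (idx (T + 1))))‖
            + ‖η (T + 1) • (grad (wt (T + 1)) (St (idx (T + 1)))
              - grad (wt (T + 1)) (S (idx (T + 1))))‖ := by
            rw [hdecomp]; exact norm_add_le _ _
        _ ≤ ‖w (T + 1) - wt (T + 1)‖ + η (T + 1) * (2 * G) := by
            apply add_le_add hne
            rw [norm_smul]
            simp [abs_of_pos (hη0 (T + 1))]
            exact mul_le_mul_of_nonneg_left hGdiff (hη0 (T + 1)).le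
        _ ≤ 2 * G * ∑ t ∈ Finset.Icc 1 T, η t * (if idx t = i₀ then 1 else 0)
            + 2 * G * (η (T + 1) * 1) := by
            apply add_le_add ih
            apply le_of_eq; ring
    · -- same example: non-expansive step
      have hSe : S (idx (T + 1)) = St (idx (T + 1)) := hagree _ hc
      have hdiff : w (T + 1 + 1) - wt (T + 1 + 1)
          = (w (T + 1) - η (T + 1) • grad (w (T + 1)) (S (idx (T + 1))))
            - (wt (T + 1) - η (T + 1) • grad (wt (T + 1)) (S (idx (T + 1)))) := by
        rw [hu, hut, hSe]
      have hne := aux_nonexp (fun v => f v (S (idx (T + 1))))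
        (fun v => grad v (S (idx (T + 1)))) L hL
        (fun v => hgrad (S (idx (T + 1))) v) (hconv _)
        (fun v v' => hsmooth _ v v') (η (T + 1)) (hη0 _) (hη _)
        (w (T + 1)) (wt (T + 1))
      rw [hdiff]
      simp only [hc, if_neg hc, mul_zero]
      calc _ ≤ ‖w (T + 1) - wt (T + 1)‖ := hne
        _ ≤ 2 * G * ∑ t ∈ Finset.Icc 1 T, η t * (if idx t = i₀ then 1 else 0) := ih
        _ ≤ _ := by simp
end
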